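/- For any two Laplacian matrices L and L̂ of connected graphs on n nodes, tr((L + L̂)^†) ≤ (1/4) tr(L^†) + (1/4) tr(L̂^†); equivalently tr(L̂^†) + tr(L^†) − 4 tr((L+L̂)^†) ≥ 0. -/

import Mathlib

/-! The pseudoinverse of a positive semidefinite `A` is variational:
`xᵀ A† x = sup_w (2 wᵀ A A† x - wᵀ A w)`. Since `L`, `L̂` and `L + L̂` all have kernel `span 𝟙`,
the projections `L L†`, `L̂ L̂†` and `(L + L̂)(L + L̂)†` coincide, and evaluating the suprema for
`L` and `L̂` at `w = 2 (L + L̂)† x` gives `4 (L + L̂)† ≤ L† + L̂†` in the Loewner order.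
Taking traces gives the inequality. -/

open Matrix

/-- `B` is the Moore–Penrose pseudoinverse of `A`. -/
def IsMPInv {n : ℕ} (A B : Matrix (Fin n) (Fin n) ℝ) : Prop :=
  A * B * A = A ∧ B * A * B = B ∧ (A * B)ᵀ = A * B ∧ (B * A)ᵀ = B * A

open scoped ComplexOrder in
theorem Matrix.PosSemidef.mulVec_eq_zero_of_add {ι 𝕜 : Type*} [Fintype ι] [RCLike 𝕜]
    {A B : Matrix ι ι 𝕜} (hA : A.PosSemidef) (hB : B.PosSemidef) {x : ι → 𝕜}
    (hx : (A + B) *ᵥ x = 0) : A *ᵥ x = 0 := by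
  have hsum : star x ⬝ᵥ A *ᵥ x + star x ⬝ᵥ B *ᵥ x = 0 := by
    rw [← dotProduct_add, ← add_mulVec, hx, dotProduct_zero]
  exact (hA.dotProduct_mulVec_zero_iff x).mp
    ((add_eq_zero_iff_of_nonneg (hA.dotProduct_mulVec_nonneg x)
      (hB.dotProduct_mulVec_nonneg x)).mp hsum).1

namespace IsMPInv

variable {n : ℕ} {A B C A' B' : Matrix (Fin n) (Fin n) ℝ}

theorem transpose (h : IsMPInv A B) : IsMPInv Aᵀ Bᵀ := by
  obtain ⟨h1, h2, h3, h4⟩ := h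
  refine ⟨?_, ?_, ?_, ?_⟩
  · rw [← transpose_mul, ← transpose_mul, ← Matrix.mul_assoc, h1]
  · rw [← transpose_mul, ← transpose_mul, ← Matrix.mul_assoc, h2]
  · rw [← transpose_mul, transpose_transpose, h4]
  · rw [← transpose_mul, transpose_transpose, h3]

theorem unique (hB : IsMPInv A B) (hC : IsMPInv A C) : B = C := by
  obtain ⟨b1, b2, b3, b4⟩ := hB
  obtain ⟨c1, c2, c3, c4⟩ := hC
  have c1t : Aᵀ * (Cᵀ * Aᵀ) = Aᵀ := by
    simpa only [transpose_mul, Matrix.mul_assoc] using congrArg Matrix.transpose c1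
  have hAB : A * B = A * C :=
    calc A * B = Bᵀ * (Aᵀ * (Cᵀ * Aᵀ)) := by rw [c1t, ← transpose_mul, b3]
      _ = (A * B) * (A * C) := by
        rw [← Matrix.mul_assoc, ← transpose_mul, ← transpose_mul, b3, c3]
      _ = A * C := by rw [← Matrix.mul_assoc, b1]
  have hBA : B * A = C * A :=
    calc B * A = (Aᵀ * (Cᵀ * Aᵀ)) * Bᵀ := by rw [c1t, ← transpose_mul, b4]
      _ = (C * A) * (B * A) := by
        rw [← Matrix.mul_assoc Aᵀ, Matrix.mul_assoc, ← transpose_mul, ← transpose_mul, b4, c4]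
      _ = C * A := by rw [Matrix.mul_assoc, ← Matrix.mul_assoc A, b1]
  calc B = C * A * B := by rw [← hBA, b2]
    _ = C := by rw [Matrix.mul_assoc, hAB, ← Matrix.mul_assoc, c2]

theorem transpose_eq_self (hA : A.IsSymm) (h : IsMPInv A B) : Bᵀ = B :=
  (h.unique (hA.eq ▸ h.transpose)).symm

theorem mul_comm (hA : A.IsSymm) (h : IsMPInv A B) : A * B = B * A := by
  rw [← h.2.2.1, transpose_mul, h.transpose_eq_self hA, hA.eq]

theorem mul_mul_self (hA : A.IsSymm) (h : IsMPInv A B) : A * (A * B) = A := by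
  rw [h.mul_comm hA, ← Matrix.mul_assoc, h.1]

/-- `(A * B) x - x ∈ ker A ⊆ ker A'`, and `A' * B'` kills `ker A'`. -/
theorem mul_mul_eq_of_ker_le (hA : A.IsSymm) (hA' : A'.IsSymm) (h : IsMPInv A B)
    (h' : IsMPInv A' B') (hker : ∀ x, A *ᵥ x = 0 → A' *ᵥ x = 0) :
    A' * B' * (A * B) = A' * B' := by
  refine ext_iff_mulVec.mpr fun x ↦ ?_
  have hx : A' *ᵥ ((A * B) *ᵥ x - x) = 0 :=
    hker _ (by rw [mulVec_sub, mulVec_mulVec, h.mul_mul_self hA, sub_self])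
  have hx' : (A' * B') *ᵥ ((A * B) *ᵥ x - x) = 0 := by
    rw [h'.mul_comm hA', ← mulVec_mulVec, hx, mulVec_zero]
  rw [← mulVec_mulVec, ← sub_eq_zero, ← mulVec_sub, hx']

theorem mul_eq_of_ker_iff (hA : A.IsSymm) (hA' : A'.IsSymm) (h : IsMPInv A B)
    (h' : IsMPInv A' B') (hker : ∀ x, A *ᵥ x = 0 ↔ A' *ᵥ x = 0) :
    A * B = A' * B' :=
  calc A * B = (A * B * (A' * B'))ᵀ := by
        rw [h'.mul_mul_eq_of_ker_le hA' hA h fun x ↦ (hker x).mpr, h.2.2.1]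
    _ = A' * B' := by
        rw [transpose_mul, h.2.2.1, h'.2.2.1, h.mul_mul_eq_of_ker_le hA hA' h' fun x ↦ (hker x).mp]

theorem two_mul_dotProduct_sub_le (hA : A.PosSemidef) (h : IsMPInv A B) (x w : Fin n → ℝ) :
    2 * (w ⬝ᵥ (A * B) *ᵥ x) - w ⬝ᵥ A *ᵥ w ≤ x ⬝ᵥ B *ᵥ x := by
  have hAs : A.IsSymm := isHermitian_iff_isSymm.mp hA.1
  have hBs := h.transpose_eq_self hAs
  have hnonneg := hA.dotProduct_mulVec_nonneg (w - B *ᵥ x)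
  have e1 : (B *ᵥ x) ⬝ᵥ A *ᵥ w = w ⬝ᵥ (A * B) *ᵥ x := by
    rw [dotProduct_comm, dotProduct_mulVec, vecMul_mulVec, hAs.eq, ← dotProduct_mulVec]
  have e2 : (B *ᵥ x) ⬝ᵥ A *ᵥ (B *ᵥ x) = x ⬝ᵥ B *ᵥ x := by
    rw [dotProduct_mulVec, vecMul_mulVec, ← dotProduct_mulVec, mulVec_mulVec, hBs, h.2.1]
  rw [star_trivial, mulVec_sub, dotProduct_sub, sub_dotProduct, sub_dotProduct, e1, e2,
    mulVec_mulVec] at hnonneg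
  linarith

theorem posSemidef_add_sub_four_smul {L M Ld Md Sd : Matrix (Fin n) (Fin n) ℝ}
    (hL : L.PosSemidef) (hM : M.PosSemidef) (hLd : IsMPInv L Ld) (hMd : IsMPInv M Md)
    (hSd : IsMPInv (L + M) Sd) (hker : ∀ x, L *ᵥ x = 0 ↔ M *ᵥ x = 0) :
    (Ld + Md - (4 : ℝ) • Sd).PosSemidef := by
  have hLs : L.IsSymm := isHermitian_iff_isSymm.mp hL.1
  have hMs : M.IsSymm := isHermitian_iff_isSymm.mp hM.1
  have hSs : (L + M).IsSymm := isHermitian_iff_isSymm.mp (hL.add hM).1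
  have hSker (x : Fin n → ℝ) : (L + M) *ᵥ x = 0 ↔ L *ᵥ x = 0 :=
    ⟨hL.mulVec_eq_zero_of_add hM, fun hx ↦ by rw [add_mulVec, hx, (hker x).mp hx, add_zero]⟩
  have hPL := hSd.mul_eq_of_ker_iff hSs hLs hLd hSker
  have hPM := hSd.mul_eq_of_ker_iff hSs hMs hMd fun x ↦ (hSker x).trans (hker x)
  have hSds := hSd.transpose_eq_self hSs
  refine .of_dotProduct_mulVec_nonneg ?_ fun x ↦ ?_
  · refine isHermitian_iff_isSymm.mpr ?_
    simp only [IsSymm, transpose_sub, transpose_add, transpose_smul, hLd.transpose_eq_self hLs,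
      hMd.transpose_eq_self hMs, hSds]
  set y := Sd *ᵥ x
  have hyS : y ⬝ᵥ (L + M) *ᵥ y = x ⬝ᵥ Sd *ᵥ x := by
    rw [dotProduct_mulVec, vecMul_mulVec, ← dotProduct_mulVec, mulVec_mulVec, hSds, hSd.2.1]
  have hyP : y ⬝ᵥ ((L + M) * Sd) *ᵥ x = x ⬝ᵥ Sd *ᵥ x := by rw [← mulVec_mulVec, hyS]
  have hqL := hLd.two_mul_dotProduct_sub_le hL x ((2 : ℝ) • y)
  have hqM := hMd.two_mul_dotProduct_sub_le hM x ((2 : ℝ) • y)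
  rw [← hPL] at hqL
  rw [← hPM] at hqM
  rw [add_mulVec, dotProduct_add] at hyS
  simp only [smul_dotProduct, mulVec_smul, dotProduct_smul, smul_eq_mul, hyP] at hqL hqM
  simp only [star_trivial, sub_mulVec, add_mulVec, smul_mulVec, dotProduct_sub, dotProduct_add,
    dotProduct_smul, smul_eq_mul]
  linarith

end IsMPInv

theorem Matrix.mulVec_eq_zero_of_forall_eq_const {ι R : Type*} [Fintype ι] [CommSemiring R]
    {A B : Matrix ι ι R} (hA : ∀ x, A *ᵥ x = 0 → ∃ c : R, x = fun _ ↦ c)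
    (hB : B *ᵥ (fun _ ↦ 1) = 0) {x : ι → R} (hx : A *ᵥ x = 0) : B *ᵥ x = 0 := by
  obtain ⟨c, rfl⟩ := hA x hx
  rw [show (fun _ ↦ c) = c • fun _ : ι ↦ (1 : R) by ext; simp, mulVec_smul, hB, smul_zero]

theorem trace_pinv_sum_le_general {n : ℕ}
    (L Lhat : Matrix (Fin n) (Fin n) ℝ)
    (hLpsd : L.PosSemidef)
    (hLone : L.mulVec (fun _ => 1) = 0)
    (hLker : ∀ x, L.mulVec x = 0 → ∃ c : ℝ, x = fun _ => c)
    (hhpsd : Lhat.PosSemidef)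
    (hhone : Lhat.mulVec (fun _ => 1) = 0)
    (hhker : ∀ x, Lhat.mulVec x = 0 → ∃ c : ℝ, x = fun _ => c)
    (Ld Lhatd Sd : Matrix (Fin n) (Fin n) ℝ)
    (hLd : IsMPInv L Ld) (hLhatd : IsMPInv Lhat Lhatd) (hSd : IsMPInv (L + Lhat) Sd) :
    Sd.trace ≤ (1/4) * Ld.trace + (1/4) * Lhatd.trace ∧
    0 ≤ Lhatd.trace + Ld.trace - 4 * Sd.trace := by
  have hker (x : Fin n → ℝ) : L *ᵥ x = 0 ↔ Lhat *ᵥ x = 0 :=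
    ⟨mulVec_eq_zero_of_forall_eq_const hLker hhone, mulVec_eq_zero_of_forall_eq_const hhker hLone⟩
  have htrace :=
    (IsMPInv.posSemidef_add_sub_four_smul hLpsd hhpsd hLd hLhatd hSd hker).trace_nonneg
  rw [trace_sub, trace_add, trace_smul, smul_eq_mul] at htrace
  constructor <;> linarith

/-- For any two Laplacians `L`, `L̂` of connected graphs,
`tr((L + L̂)†) ≤ (1/4) tr(L†) + (1/4) tr(L̂†)`, equivalently
`tr(L̂†) + tr(L†) - 4 tr((L+L̂)†) ≥ 0`. -/
theorem trace_pinv_sum_le {n : ℕ}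
    (L Lhat : Matrix (Fin n) (Fin n) ℝ)
    (hLsym : L.IsSymm) (hLpsd : L.PosSemidef)
    (hLone : L.mulVec (fun _ => 1) = 0)
    (hLker : ∀ x, L.mulVec x = 0 → ∃ c : ℝ, x = fun _ => c)
    (hhsym : Lhat.IsSymm) (hhpsd : Lhat.PosSemidef)
    (hhone : Lhat.mulVec (fun _ => 1) = 0)
    (hhker : ∀ x, Lhat.mulVec x = 0 → ∃ c : ℝ, x = fun _ => c)
    (Ld Lhatd Sd : Matrix (Fin n) (Fin n) ℝ)
    (hLd : IsMPInv L Ld) (hLhatd : IsMPInv Lhat Lhatd) (hSd : IsMPInv (L + Lhat) Sd) :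
    Sd.trace ≤ (1/4) * Ld.trace + (1/4) * Lhatd.trace ∧
    0 ≤ Lhatd.trace + Ld.trace - 4 * Sd.trace :=
  trace_pinv_sum_le_general L Lhat hLpsd hLone hLker hhpsd hhone hhker Ld Lhatd Sd hLd hLhatd hSd
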